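/- arXiv:2104.10808 — 2 statements merged into one kernel-verified Lean document; each statement's English description precedes it below -/
import Mathlib

section
/- Let F(x) = 2^{-r}(1+tanh x)^{r} on ℝ with r > 0 (Burr VII). Then F^{-1}(1-u) = (1/2) log r + (1/2) log(1/u) - ((1+r)/(4r))u + O(u²) as u → 0⁺. -/
/-!
Write `(1 - u) ^ (1 / r) = exp x` with `x = log (1 - u) / r = -u / r + O(u²)`. The quantile is
`(x - log (1 - exp x)) / 2`, and `1 - exp x = (u / r) * P u * Q x` with
`P u = -log (1 - u) / u = 1 + u / 2 + O(u²)` and `Q x = (exp x - 1) / x = 1 + x / 2 + O(x²)`.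
Taking logarithms, all terms of order `u` cancel against `-((1 + r) / (4 * r)) * u`.
-/

open Real Filter Asymptotics Topology

namespace Real

lemma sum_range_add_log_one_sub_isBigO_pow (n : ℕ) :
    (fun x : ℝ ↦ (∑ i ∈ Finset.range n, x ^ (i + 1) / (i + 1)) + log (1 - x))
      =O[𝓝 0] (· ^ (n + 1)) := by
  refine IsBigO.of_bound 2 ?_
  filter_upwards [Metric.ball_mem_nhds (0 : ℝ) (by norm_num : (0 : ℝ) < 1 / 2)] with x hx
  rw [Metric.mem_ball, dist_zero_right, norm_eq_abs] at hx
  rw [norm_eq_abs, norm_pow, norm_eq_abs]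
  refine (abs_log_sub_add_sum_range_le (by linarith) n).trans ?_
  rw [div_le_iff₀ (by linarith)]
  nlinarith [pow_nonneg (abs_nonneg x) (n + 1)]

lemma log_one_sub_isBigO_id : (fun x : ℝ ↦ log (1 - x)) =O[𝓝 0] fun x ↦ x := by
  simpa using sum_range_add_log_one_sub_isBigO_pow 0

lemma log_one_sub_add_self_isBigO_sq : (fun x : ℝ ↦ log (1 - x) + x) =O[𝓝 0] (· ^ 2) :=
  (sum_range_add_log_one_sub_isBigO_pow 1).congr_left fun x ↦ by
    simp only [Finset.sum_range_one]; push_cast; ring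

end Real

lemma isBigO_div_self_sub_of_isBigO {f : ℝ → ℝ} {c : ℝ}
    (h : (fun y ↦ f y - (y + c * y ^ 2)) =O[𝓝 0] (· ^ 3)) :
    (fun y ↦ f y / y - (1 + c * y)) =O[𝓝[≠] 0] (· ^ 2) := by
  refine ((h.mono nhdsWithin_le_nhds).mul (isBigO_refl (fun y : ℝ ↦ y⁻¹) _)).congr' ?_ ?_ <;>
    filter_upwards [self_mem_nhdsWithin] with y (hy : y ≠ 0)
  · field_simp
  · field_simp

lemma isBigO_log_sub_of_isBigO {α : Type*} {l : Filter α} {g q : α → ℝ} {a : ℝ}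
    (hg : Tendsto g l (𝓝 0)) (hq : (fun i ↦ q i - (1 + a * g i)) =O[l] fun i ↦ g i ^ 2) :
    (fun i ↦ log (q i) - a * g i) =O[l] fun i ↦ g i ^ 2 := by
  have hsq : (fun i ↦ g i ^ 2) =O[l] g := by
    simpa [sq] using (isBigO_refl g l).mul (hg.isBigO_one ℝ)
  have ht : (fun i ↦ 1 - q i) =O[l] g :=
    (((isBigO_refl g l).const_mul_left a).neg_left.sub (hq.trans hsq)).congr_left
      fun i ↦ by ring
  have hlog := log_one_sub_add_self_isBigO_sq.comp_tendsto (ht.trans_tendsto hg)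
  refine ((hlog.trans (ht.pow 2)).add hq).congr_left fun i ↦ ?_
  simp only [Function.comp_apply, sub_sub_cancel]
  ring

lemma exp_sub_one_div_self_sub_isBigO :
    (fun x ↦ (exp x - 1) / x - (1 + 1 / 2 * x)) =O[𝓝[≠] 0] (· ^ 2) :=
  isBigO_div_self_sub_of_isBigO <| (exp_sub_sum_range_isBigO_pow 3).congr_left fun x ↦ by
    simp only [Finset.sum_range_succ, Finset.sum_range_zero, Nat.factorial]; push_cast; ring

lemma neg_log_one_sub_div_self_sub_isBigO :
    (fun u ↦ -log (1 - u) / u - (1 + 1 / 2 * u)) =O[𝓝[≠] 0] (· ^ 2) :=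
  isBigO_div_self_sub_of_isBigO <|
    (sum_range_add_log_one_sub_isBigO_pow 2).neg_left.congr_left fun x ↦ by
      simp only [Finset.sum_range_succ, Finset.sum_range_zero]; push_cast; ring

lemma burrVII_quantile_one_sub_eq {r u : ℝ} (hr : 0 < r) (hu₀ : 0 < u) (hu₁ : u < 1) :
    (1 / 2) * log ((1 + (2 * (1 - u) ^ (1 / r : ℝ) - 1)) / (1 - (2 * (1 - u) ^ (1 / r : ℝ) - 1)))
        - ((1 / 2) * log r + (1 / 2) * log (1 / u) - ((1 + r) / (4 * r)) * u)
      = (log (1 - u) + u) / (4 * r) - (log (-log (1 - u) / u) - 1 / 2 * u) / 2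
        - (log ((exp (log (1 - u) / r) - 1) / (log (1 - u) / r))
          - 1 / 2 * (log (1 - u) / r)) / 2 := by
  set x := log (1 - u) / r with hx_def
  have hL : log (1 - u) < 0 := log_neg (by linarith) (by linarith)
  have hx : x < 0 := div_neg_of_neg_of_pos hL hr
  have hv : (1 - u) ^ (1 / r : ℝ) = exp x := by
    rw [rpow_def_of_pos (by linarith), mul_one_div]
  have hv₁ : exp x < 1 := exp_lt_one_iff.mpr hx
  have hP : 0 < -log (1 - u) / u := div_pos (neg_pos.mpr hL) hu₀
  have hQ : 0 < (exp x - 1) / x := div_pos_of_neg_of_neg (by linarith) hx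
  have hfactor : 1 - exp x = u / r * (-log (1 - u) / u) * ((exp x - 1) / x) := by
    rw [show u / r * (-log (1 - u) / u) = -x by rw [hx_def]; field_simp]
    field_simp [hx.ne]
    ring
  have hlog : log (1 - exp x)
      = log u - log r + log (-log (1 - u) / u) + log ((exp x - 1) / x) := by
    rw [hfactor, log_mul (by positivity) hQ.ne', log_mul (by positivity) hP.ne',
      log_div hu₀.ne' hr.ne']
  rw [hv, show (1 + (2 * exp x - 1)) / (1 - (2 * exp x - 1)) = exp x / (1 - exp x) by
      rw [div_eq_div_iff (by linarith) (by linarith)]; ring,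
    log_div (exp_pos x).ne' (by linarith), log_exp, hlog, one_div u, log_inv, hx_def]
  field_simp
  ring

/-- Burr VII quantile expansion: with `F⁻¹(v) = artanh (2 v^{1/r} - 1)`
(where `artanh y = (1/2) log ((1+y)/(1-y))`),
`F⁻¹(1-u) = (1/2) log r + (1/2) log(1/u) - ((1+r)/(4r)) u + O(u²)` as `u → 0⁺`. -/
theorem burrVII_quantile_expansion (r : ℝ) (hr : 0 < r) :
    (fun u : ℝ =>
        (1 / 2) * Real.log ((1 + (2 * (1 - u) ^ (1 / r : ℝ) - 1))
            / (1 - (2 * (1 - u) ^ (1 / r : ℝ) - 1)))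
          - ((1 / 2) * Real.log r + (1 / 2) * Real.log (1 / u) - ((1 + r) / (4 * r)) * u))
      =O[𝓝[>] (0 : ℝ)] fun u => u ^ 2 := by
  have hx_lin : (fun u : ℝ ↦ log (1 - u) / r) =O[𝓝[>] 0] fun u ↦ u :=
    ((log_one_sub_isBigO_id.mono nhdsWithin_le_nhds).const_mul_left r⁻¹).congr_left
      fun u ↦ inv_mul_eq_div _ _
  have hx : Tendsto (fun u : ℝ ↦ log (1 - u) / r) (𝓝[>] 0) (𝓝[≠] 0) := by
    refine tendsto_nhdsWithin_iff.mpr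
      ⟨hx_lin.trans_tendsto (tendsto_nhdsWithin_of_tendsto_nhds tendsto_id), ?_⟩
    filter_upwards [Ioo_mem_nhdsGT one_pos] with u hu
    exact (div_neg_of_neg_of_pos (log_neg (by linarith [hu.2]) (by linarith [hu.1])) hr).ne
  have hlin : (fun u : ℝ ↦ 1 / (4 * r) * (log (1 - u) + u)) =O[𝓝[>] 0] (· ^ 2) :=
    (log_one_sub_add_self_isBigO_sq.mono nhdsWithin_le_nhds).const_mul_left _
  have hP : (fun u : ℝ ↦ log (-log (1 - u) / u) - 1 / 2 * u) =O[𝓝[>] 0] (· ^ 2) :=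
    isBigO_log_sub_of_isBigO (tendsto_nhdsWithin_of_tendsto_nhds tendsto_id)
      (neg_log_one_sub_div_self_sub_isBigO.mono (nhdsGT_le_nhdsNE 0))
  have hQ : (fun u : ℝ ↦ log ((exp (log (1 - u) / r) - 1) / (log (1 - u) / r))
      - 1 / 2 * (log (1 - u) / r)) =O[𝓝[>] 0] (· ^ 2) :=
    (isBigO_log_sub_of_isBigO (tendsto_nhdsWithin_iff.mp hx).1
      (exp_sub_one_div_self_sub_isBigO.comp_tendsto hx)).trans (hx_lin.pow 2)
  refine ((hlin.sub (hP.const_mul_left (1 / 2))).sub (hQ.const_mul_left (1 / 2))).congr' ?_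
    EventuallyEq.rfl
  filter_upwards [Ioo_mem_nhdsGT one_pos] with u hu
  rw [burrVII_quantile_one_sub_eq hr hu.1 hu.2]
  ring
end

section
/- For the Burr V cdf F (parameters k, r > 0), with s(u) = (log(kr/u))^{-2}, for every λ > 0 one has lim_{u→0⁺} (F^{-1}(1-λu) - F^{-1}(1-u))/s(u) = -log λ; hence F belongs to the Gumbel max-domain of attraction. -/
/-!
Write `g u = log (k / ((1 - u) ^ (-1/r) - 1))` and `L u = log (k r / u)`, so that the quantile
is `arctan ∘ g` at `1 - u`. Since `(1 - u) ^ (-1/r) - 1 ~ u / r`, we have `g = L + o(1)` and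
`g (λ u) = L u - log λ + o(1)` as `u → 0⁺`. For large positive `a`,
`arctan a = π/2 - 1/a + O(a⁻³)`, so `arctan a - arctan b = (a - b) / (a b) + O(a⁻³ + b⁻³)`;
when `a - L` and `b - L` converge and `L → ∞`, multiplying by `L²` leaves the limit of `a - b`.
-/

open Real Filter Topology

namespace Real

lemma arctan_le_self {x : ℝ} (hx : 0 ≤ x) : arctan x ≤ x := by
  simpa only [tan_arctan] using le_tan (arctan_nonneg.2 hx) (arctan_lt_pi_div_two x)

lemma sub_pow_three_div_three_le_arctan {x : ℝ} (hx : 0 ≤ x) : x - x ^ 3 / 3 ≤ arctan x := by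
  have hderiv (t : ℝ) : HasDerivAt (fun t => arctan t - t + t ^ 3 / 3)
      (1 / (1 + t ^ 2) - 1 + t ^ 2) t :=
    (((hasDerivAt_arctan t).sub (hasDerivAt_id' t)).add
      ((hasDerivAt_pow 3 t).div_const 3)).congr_deriv (by norm_num)
  have hmono : Monotone fun t => arctan t - t + t ^ 3 / 3 := by
    refine monotone_of_deriv_nonneg (fun t => (hderiv t).differentiableAt) fun t => ?_
    rw [(hderiv t).deriv]
    have hquot : 1 / (1 + t ^ 2) - 1 + t ^ 2 = t ^ 4 / (1 + t ^ 2) := by field_simp; ring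
    rw [hquot]
    positivity
  linarith [hmono hx, arctan_zero]

lemma abs_arctan_sub_self_le (x : ℝ) : |arctan x - x| ≤ |x| ^ 3 / 3 := by
  rcases le_total 0 x with hx | hx
  · rw [abs_of_nonpos (by linarith [arctan_le_self hx]), abs_of_nonneg hx]
    linarith [sub_pow_three_div_three_le_arctan hx]
  · have hx' : 0 ≤ -x := neg_nonneg.2 hx
    rw [abs_of_nonneg (by linarith [arctan_le_self hx', arctan_neg x]), abs_of_nonpos hx]
    linarith [sub_pow_three_div_three_le_arctan hx', arctan_neg x]

end Real

section ArctanAtTop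

variable {α : Type*} {l : Filter α} {a b L : α → ℝ} {c d : ℝ}

lemma tendsto_atTop_of_tendsto_sub (hL : Tendsto L l atTop)
    (ha : Tendsto (fun x => a x - L x) l (𝓝 c)) : Tendsto a l atTop :=
  (ha.add_atTop hL).congr fun x => sub_add_cancel (a x) (L x)

lemma tendsto_div_of_tendsto_sub (hL : Tendsto L l atTop)
    (ha : Tendsto (fun x => a x - L x) l (𝓝 c)) : Tendsto (fun x => L x / a x) l (𝓝 1) := by
  have hratio : Tendsto (fun x => a x / L x) l (𝓝 1) := by
    have h := (ha.mul (tendsto_inv_atTop_zero.comp hL)).add_const 1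
    rw [mul_zero, zero_add] at h
    refine h.congr' ?_
    filter_upwards [hL.eventually_ne_atTop 0] with x hx
    simp only [Function.comp_apply]
    field_simp
    ring
  simpa only [inv_div, inv_one] using hratio.inv₀ one_ne_zero

lemma tendsto_arctan_inv_sub_inv_mul_sq (hL : Tendsto L l atTop)
    (ha : Tendsto (fun x => a x - L x) l (𝓝 c)) :
    Tendsto (fun x => (arctan (a x)⁻¹ - (a x)⁻¹) * L x ^ 2) l (𝓝 0) := by
  have hbound : Tendsto (fun x => (L x / a x) ^ 2 * |(a x)⁻¹| / 3) l (𝓝 0) := by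
    have hinv := (tendsto_inv_atTop_zero.comp (tendsto_atTop_of_tendsto_sub hL ha)).abs
    simpa using (((tendsto_div_of_tendsto_sub hL ha).pow 2).mul hinv).div_const 3
  refine squeeze_zero_norm (fun x => ?_) hbound
  rw [norm_mul, norm_pow, Real.norm_eq_abs, Real.norm_eq_abs, sq_abs]
  calc |arctan (a x)⁻¹ - (a x)⁻¹| * L x ^ 2 ≤ |(a x)⁻¹| ^ 3 / 3 * L x ^ 2 := by
        gcongr; exact abs_arctan_sub_self_le _
    _ = (L x / a x) ^ 2 * |(a x)⁻¹| / 3 := by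
        rw [abs_inv, div_pow, ← sq_abs (a x)]; ring

theorem tendsto_arctan_sub_arctan_mul_sq (hL : Tendsto L l atTop)
    (ha : Tendsto (fun x => a x - L x) l (𝓝 c)) (hb : Tendsto (fun x => b x - L x) l (𝓝 d)) :
    Tendsto (fun x => (arctan (a x) - arctan (b x)) * L x ^ 2) l (𝓝 (c - d)) := by
  have hsplit : ∀ᶠ x in l,
      (a x - L x - (b x - L x)) * (L x / a x) * (L x / b x)
        + (arctan (b x)⁻¹ - (b x)⁻¹) * L x ^ 2 - (arctan (a x)⁻¹ - (a x)⁻¹) * L x ^ 2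
        = (arctan (a x) - arctan (b x)) * L x ^ 2 := by
    filter_upwards [(tendsto_atTop_of_tendsto_sub hL ha).eventually_gt_atTop 0,
      (tendsto_atTop_of_tendsto_sub hL hb).eventually_gt_atTop 0] with x hax hbx
    rw [arctan_inv_of_pos hax, arctan_inv_of_pos hbx]
    field_simp
    ring
  have hlim := (((ha.sub hb).mul (tendsto_div_of_tendsto_sub hL ha)).mul
    (tendsto_div_of_tendsto_sub hL hb)).add (tendsto_arctan_inv_sub_inv_mul_sq hL hb)
    |>.sub (tendsto_arctan_inv_sub_inv_mul_sq hL ha)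
  rw [mul_one, mul_one, add_zero, sub_zero] at hlim
  exact hlim.congr' hsplit

end ArctanAtTop

lemma tendsto_one_sub_rpow_sub_one_div (p : ℝ) :
    Tendsto (fun u : ℝ => ((1 - u) ^ p - 1) / u) (𝓝[≠] 0) (𝓝 (-p)) := by
  have hderiv : HasDerivAt (fun u : ℝ => (1 - u) ^ p) (-p) 0 := by
    simpa using ((hasDerivAt_id (0 : ℝ)).const_sub 1).rpow_const (p := p) (by simp)
  exact (hasDerivAt_iff_tendsto_slope.mp hderiv).congr fun u => by simp [slope_def_field]

lemma tendsto_log_div_rpow_sub_log_div {k r : ℝ} (hk : k ≠ 0) (hr : r ≠ 0) :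
    Tendsto (fun u : ℝ => log (k / ((1 - u) ^ (-1 / r) - 1)) - log (k * r / u))
      (𝓝[>] 0) (𝓝 0) := by
  have hslope : Tendsto (fun u : ℝ => ((1 - u) ^ (-1 / r) - 1) / u) (𝓝[>] 0) (𝓝 r⁻¹) := by
    simpa [neg_div] using
      (tendsto_one_sub_rpow_sub_one_div (-1 / r)).mono_left (nhdsGT_le_nhdsNE 0)
  have hlog := ((hslope.const_mul r).log (by simp [hr])).neg
  rw [mul_inv_cancel₀ hr, log_one, neg_zero] at hlog
  refine hlog.congr' ?_
  filter_upwards [hslope.eventually_ne (inv_ne_zero hr)] with u hu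
  obtain ⟨hD, hu0⟩ := div_ne_zero_iff.1 hu
  rw [← log_inv, ← log_div (div_ne_zero hk hD) (div_ne_zero (mul_ne_zero hk hr) hu0)]
  congr 1
  field_simp

/-- Burr V is in the Gumbel max-domain of attraction: with
`F⁻¹(v) = arctan (log (k/(v^{-1/r}-1)))` and `s(u) = (log(kr/u))⁻²`, for every `λ > 0`,
`(F⁻¹(1-λu) - F⁻¹(1-u))/s(u) → -log λ` as `u → 0⁺`. -/
theorem burrV_gumbel_domain (k r : ℝ) (hk : 0 < k) (hr : 0 < r)
    (lam : ℝ) (hlam : 0 < lam) :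
    Filter.Tendsto
      (fun u : ℝ =>
        (Real.arctan (Real.log (k / ((1 - lam * u) ^ (-1 / r : ℝ) - 1)))
            - Real.arctan (Real.log (k / ((1 - u) ^ (-1 / r : ℝ) - 1))))
          / (Real.log (k * r / u)) ^ (-2 : ℝ))
      (𝓝[>] (0 : ℝ)) (𝓝 (-Real.log lam)) := by
  set L : ℝ → ℝ := fun u => log (k * r / u)
  have hL : Tendsto L (𝓝[>] 0) atTop := tendsto_log_atTop.comp <|
    (tendsto_inv_nhdsGT_zero.const_mul_atTop (mul_pos hk hr)).congr fun u => div_eq_mul_inv _ _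
  have hscale : Tendsto (lam * ·) (𝓝[>] 0) (𝓝[>] 0) :=
    tendsto_iff_comap.2 (comap_mulLeft_nhdsGT_zero hlam).ge
  have hb := tendsto_log_div_rpow_sub_log_div hk.ne' hr.ne'
  have hshift : ∀ᶠ u in 𝓝[>] 0, -log lam = L (lam * u) - L u := by
    filter_upwards [self_mem_nhdsWithin] with u (hu : 0 < u)
    rw [← log_inv, ← log_div (by positivity) (by positivity)]
    congr 1
    field_simp
  have ha : Tendsto (fun u => log (k / ((1 - lam * u) ^ (-1 / r) - 1)) - L u) (𝓝[>] 0)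
      (𝓝 (0 + -log lam)) :=
    ((hb.comp hscale).add (tendsto_const_nhds.congr' hshift)).congr fun u => by
      simp only [Function.comp_apply, L]; ring
  have hlim := tendsto_arctan_sub_arctan_mul_sq hL ha hb
  rw [zero_add, sub_zero] at hlim
  refine hlim.congr fun u => ?_
  rw [rpow_neg_ofNat, zpow_neg, zpow_ofNat, div_inv_eq_mul]
end
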